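/- arXiv:1812.11781 — 3 statements merged into one kernel-verified Lean document; each statement's English description precedes it below -/
import Mathlib

section
/- Let (X, μ) be an atomless σ-finite non-zero measure space and N a Young–Orlicz function. If there exists C ∈ (0, ∞) such that ∫₀^∞ N(C t) |dV[N](t)| < ∞, then every f ∈ wL(N) belongs to sL(N); more precisely, if T[f](t) ≤ V[N](t/C₂) for all t ≥ 0 and some C₂ ∈ (0, ∞), then for every C₃ > 0 with C₂ C₃ ≤ C one has ∫_X N(C₃ |f(x)|) dμ(x) < ∞, so ‖f‖_{sL(N)} < ∞. -/
open MeasureTheory ENNReal Set Filter Topology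

/-- A Young–Orlicz function: even, continuous, convex, non-negative, strictly increasing to
infinity on `[0, ∞)`, with `N u / u → 0` as `u → 0⁺` and `N u / u → ∞` as `u → ∞`. -/
structure IsYoungOrlicz (N : ℝ → ℝ) : Prop where
  even : ∀ u, N (-u) = N u
  continuous : Continuous N
  convexOn : ConvexOn ℝ Set.univ N
  nonneg : ∀ u, 0 ≤ N u
  strictMonoOn : StrictMonoOn N (Set.Ici 0)
  tendsto_atTop : Filter.Tendsto N Filter.atTop Filter.atTop
  tendsto_div_zero : Filter.Tendsto (fun u => N u / u) (nhdsWithin 0 (Set.Ioi 0)) (nhds 0)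
  tendsto_div_atTop : Filter.Tendsto (fun u => N u / u) Filter.atTop Filter.atTop

/-- A measure is atomless if every set of positive measure has a measurable subset of strictly
smaller positive measure. -/
def Atomless {X : Type*} [MeasurableSpace X] (μ : MeasureTheory.Measure X) : Prop :=
  ∀ s : Set X, MeasurableSet s → 0 < μ s →
    ∃ t : Set X, MeasurableSet t ∧ t ⊆ s ∧ 0 < μ t ∧ μ t < μ s

/-- The tail function `T[f](t) = μ {x : |f x| ≥ t}`. -/
noncomputable def tailFun {X : Type*} [MeasurableSpace X] (μ : MeasureTheory.Measure X)
    (f : X → ℝ) (t : ℝ) : ℝ≥0∞ :=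
  μ {x | t ≤ |f x|}

/-- `V[N](t) = min (μ X) (1 / N t)` (computed in `ℝ≥0∞`, so `1/0 = ∞`). -/
noncomputable def Vfun {X : Type*} [MeasurableSpace X] (μ : MeasureTheory.Measure X)
    (N : ℝ → ℝ) (t : ℝ) : ℝ≥0∞ :=
  min (μ Set.univ) (ENNReal.ofReal (N t))⁻¹

/-- The strong (Luxemburg) Orlicz norm, with value `∞` when `f ∉ sL(N)`. -/
noncomputable def strongNorm {X : Type*} [MeasurableSpace X] (μ : MeasureTheory.Measure X)
    (N : ℝ → ℝ) (f : X → ℝ) : ℝ≥0∞ :=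
  sInf (ENNReal.ofReal ''
    {k : ℝ | 0 < k ∧ ∫⁻ x, ENNReal.ofReal (N (|f x| / k)) ∂μ ≤ 1})

/-- The weak Orlicz (tail) norm `‖f‖_{wL(N)} = inf {K > 0 : ∀ t > 0, T[f](t) ≤ V[N](t/K)}`,
with value `∞` when `f ∉ wL(N)`. -/
noncomputable def weakNorm {X : Type*} [MeasurableSpace X] (μ : MeasureTheory.Measure X)
    (N : ℝ → ℝ) (f : X → ℝ) : ℝ≥0∞ :=
  sInf (ENNReal.ofReal ''
    {K : ℝ | 0 < K ∧ ∀ t > 0, tailFun μ f t ≤ Vfun μ N (t / K)})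

/-- `Y(N) = sup { ‖f‖_{sL(N)} / ‖f‖_{wL(N)} : f ∈ wL(N), f ≠ 0 }`. -/
noncomputable def Ynorm {X : Type*} [MeasurableSpace X] (μ : MeasureTheory.Measure X)
    (N : ℝ → ℝ) : ℝ≥0∞ :=
  ⨆ (f : X → ℝ) (_ : Measurable f) (_ : ¬ f =ᵐ[μ] (0 : X → ℝ))
    (_ : weakNorm μ N f ≠ ⊤), strongNorm μ N f / weakNorm μ N f

/-- The (generalized) inverse of a Young–Orlicz function on `[0, ∞)`. -/
noncomputable def Ninv (N : ℝ → ℝ) (w : ℝ) : ℝ :=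
  sInf {u : ℝ | 0 ≤ u ∧ w ≤ N u}

/-- `Q[N](k) = ∫_{y₀}^∞ N(y/k) |d(1/N(y))| = ∫_{1/μ(X)}^∞ N(N⁻¹(w)/k) w⁻² dw`. -/
noncomputable def Qfun {X : Type*} [MeasurableSpace X] (μ : MeasureTheory.Measure X)
    (N : ℝ → ℝ) (k : ℝ) : ℝ≥0∞ :=
  ∫⁻ w in Set.Ioi ((μ Set.univ)⁻¹.toReal), ENNReal.ofReal (N (Ninv N w / k) / w ^ 2)

/-- `G(α) = ∫₀^{1/2} (1 - z)⁻² z^{-α} dz`. -/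
noncomputable def Gfun (α : ℝ) : ℝ≥0∞ :=
  ∫⁻ z in Set.Ioo (0 : ℝ) (1/2), ENNReal.ofReal ((1 - z) ^ (-(2:ℝ)) * z ^ (-α))

/-!
By the layer-cake formula, `∫ N(C₃|f|) dμ` and `∫_{t>0} N(C t) dν(t)` are the integrals over
`s > 0` of the measures of the superlevel sets `{N(C₃|f|) ≥ s}` and `{t > 0 : N(C t) ≥ s}`.
Writing `s = N(a)`, the first set is the tail set `{|f| ≥ a / C₃}`, whose measure is at most
`V[N](a / (C₂ C₃)) ≤ V[N](a / C) = ν(a / C, ∞)`, and `(a / C, ∞)` lies in the second set.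
Hence the modular `∫ N(C₃|f|) dμ` is finite; by convexity and `N 0 = 0` it drops below `1` after
dividing the argument by a large constant, so the Luxemburg norm is finite.
-/

namespace IsYoungOrlicz

variable {N : ℝ → ℝ}

theorem map_zero (hN : IsYoungOrlicz N) : N 0 = 0 := by
  have hcont : Tendsto N (𝓝[>] 0) (𝓝 (N 0)) :=
    (hN.continuous.tendsto 0).mono_left nhdsWithin_le_nhds
  have hzero : Tendsto N (𝓝[>] 0) (𝓝 0) := by
    have h := hN.tendsto_div_zero.mul (tendsto_nhdsWithin_of_tendsto_nhds tendsto_id)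
    rw [zero_mul] at h
    refine h.congr' ?_
    filter_upwards [self_mem_nhdsWithin] with u hu
    exact div_mul_cancel₀ _ (ne_of_gt hu)
  exact tendsto_nhds_unique hcont hzero

theorem exists_pos_forall_le_iff (hN : IsYoungOrlicz N) {s : ℝ} (hs : 0 < s) :
    ∃ a, 0 < a ∧ ∀ u, 0 ≤ u → (s ≤ N u ↔ a ≤ u) := by
  obtain ⟨b, hb, hb0⟩ :=
    ((hN.tendsto_atTop.eventually_ge_atTop s).and (eventually_ge_atTop 0)).exists
  have hsN : s ∈ Icc (N 0) (N b) := ⟨hN.map_zero.symm ▸ hs.le, hb⟩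
  obtain ⟨a, ⟨ha0, -⟩, hNa⟩ :=
    intermediate_value_Icc hb0 hN.continuous.continuousOn hsN
  refine ⟨a, lt_of_le_of_ne ha0 ?_, fun u hu => ?_⟩
  · rintro rfl
    exact hs.ne' (hNa ▸ hN.map_zero)
  · rw [← hNa]
    exact hN.strictMonoOn.le_iff_le ha0 hu

end IsYoungOrlicz

theorem ConvexOn.map_mul_le_mul_of_map_zero {N : ℝ → ℝ} (hconv : ConvexOn ℝ univ N)
    (h0 : N 0 = 0) {t : ℝ} (ht0 : 0 ≤ t) (ht1 : t ≤ 1) (u : ℝ) : N (t * u) ≤ t * N u := by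
  have h := hconv.2 (mem_univ u) (mem_univ 0) ht0 (sub_nonneg.mpr ht1) (by ring)
  simpa [h0, smul_eq_mul] using h

theorem lintegral_ofReal_le_of_measure_le {α β : Type*} [MeasurableSpace α] [MeasurableSpace β]
    {μ : Measure α} {ν : Measure β} {g : α → ℝ} {h : β → ℝ}
    (hg0 : 0 ≤ᵐ[μ] g) (hg : AEMeasurable g μ) (hh0 : 0 ≤ᵐ[ν] h) (hh : AEMeasurable h ν)
    (hle : ∀ s, 0 < s → μ {x | s ≤ g x} ≤ ν {y | s ≤ h y}) :
    ∫⁻ x, ENNReal.ofReal (g x) ∂μ ≤ ∫⁻ y, ENNReal.ofReal (h y) ∂ν := by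
  rw [lintegral_eq_lintegral_meas_le μ hg0 hg, lintegral_eq_lintegral_meas_le ν hh0 hh]
  exact setLIntegral_mono' measurableSet_Ioi hle

section Orlicz

variable {X : Type*} [MeasurableSpace X] {μ : Measure X} {N : ℝ → ℝ}

theorem Vfun_le_Vfun (hN : MonotoneOn N (Ici 0)) {t t' : ℝ} (ht : 0 ≤ t) (htt' : t ≤ t') :
    Vfun μ N t' ≤ Vfun μ N t :=
  min_le_min le_rfl <| ENNReal.inv_le_inv.mpr <|
    ENNReal.ofReal_le_ofReal (hN ht (ht.trans htt') htt')

theorem lintegral_comp_mul_abs_le_of_tailFun_le (hN : IsYoungOrlicz N) {ν : Measure ℝ}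
    (hν : ∀ t : ℝ, 0 < t → ν (Ioi t) = Vfun μ N t) {C C₂ C₃ : ℝ} (hC : 0 < C)
    {f : X → ℝ} (hf : Measurable f) (hC₂ : 0 < C₂)
    (hT : ∀ t : ℝ, 0 ≤ t → tailFun μ f t ≤ Vfun μ N (t / C₂)) (hC₃ : 0 < C₃)
    (hCC : C₂ * C₃ ≤ C) :
    ∫⁻ x, ENNReal.ofReal (N (C₃ * |f x|)) ∂μ ≤
      ∫⁻ t in Ioi 0, ENNReal.ofReal (N (C * t)) ∂ν := by
  have hNmeas : Measurable N := hN.continuous.measurable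
  refine lintegral_ofReal_le_of_measure_le (.of_forall fun _ => hN.nonneg _)
    (hNmeas.comp (measurable_const.mul hf.abs)).aemeasurable (.of_forall fun _ => hN.nonneg _)
    (hNmeas.comp (measurable_const.mul measurable_id)).aemeasurable fun s hs => ?_
  obtain ⟨a, ha, hNa⟩ := hN.exists_pos_forall_le_iff hs
  have hlevel : {x | s ≤ N (C₃ * |f x|)} = {x | a / C₃ ≤ |f x|} := by
    ext x
    exact (hNa _ (by positivity)).trans (div_le_iff₀' hC₃).symm
  have hinterval : Ioi (a / C) ⊆ {t | s ≤ N (C * t)} ∩ Ioi 0 := by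
    intro t ht
    have ht0 : 0 < t := lt_trans (by positivity) ht
    refine ⟨(hNa _ (by positivity)).mpr ?_, ht0⟩
    exact ((div_lt_iff₀' hC).mp ht).le
  calc μ {x | s ≤ N (C₃ * |f x|)} = tailFun μ f (a / C₃) := by rw [hlevel]; rfl
    _ ≤ Vfun μ N (a / C₃ / C₂) := hT _ (by positivity)
    _ ≤ Vfun μ N (a / C) := by
      refine Vfun_le_Vfun hN.strictMonoOn.monotoneOn (by positivity) ?_
      rw [div_div, mul_comm C₃ C₂]
      gcongr
    _ = ν (Ioi (a / C)) := (hν _ (by positivity)).symm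
    _ ≤ ν.restrict (Ioi 0) {t | s ≤ N (C * t)} := by
      rw [Measure.restrict_apply' measurableSet_Ioi]
      exact measure_mono hinterval

theorem strongNorm_le_ofReal {f : X → ℝ} {k : ℝ} (hk : 0 < k)
    (h : ∫⁻ x, ENNReal.ofReal (N (|f x| / k)) ∂μ ≤ 1) : strongNorm μ N f ≤ ENNReal.ofReal k :=
  sInf_le ⟨k, ⟨hk, h⟩, rfl⟩

theorem strongNorm_lt_top_of_lintegral_lt_top (hconv : ConvexOn ℝ univ N) (h0 : N 0 = 0)
    {f : X → ℝ} {c : ℝ} (hc : 0 < c) (hI : ∫⁻ x, ENNReal.ofReal (N (c * |f x|)) ∂μ < ⊤) :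
    strongNorm μ N f < ⊤ := by
  set I := ∫⁻ x, ENNReal.ofReal (N (c * |f x|)) ∂μ
  set m : ℝ := max 1 I.toReal
  have hm1 : 1 ≤ m := le_max_left _ _
  have hm0 : 0 < m := one_pos.trans_le hm1
  have hIm : I ≤ ENNReal.ofReal m :=
    (ENNReal.ofReal_toReal hI.ne).symm.trans_le (ENNReal.ofReal_le_ofReal (le_max_right _ _))
  have hscale : ∀ x, N (|f x| / (m / c)) ≤ m⁻¹ * N (c * |f x|) := fun x => by
    have harg : |f x| / (m / c) = m⁻¹ * (c * |f x|) := by field_simp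
    rw [harg]
    exact hconv.map_mul_le_mul_of_map_zero h0 (by positivity) (inv_le_one_of_one_le₀ hm1) _
  refine (strongNorm_le_ofReal (div_pos hm0 hc) ?_).trans_lt ofReal_lt_top
  calc ∫⁻ x, ENNReal.ofReal (N (|f x| / (m / c))) ∂μ
      ≤ ∫⁻ x, ENNReal.ofReal m⁻¹ * ENNReal.ofReal (N (c * |f x|)) ∂μ := by
        refine lintegral_mono fun x => ?_
        rw [← ENNReal.ofReal_mul (by positivity)]
        exact ENNReal.ofReal_le_ofReal (hscale x)
    _ = ENNReal.ofReal m⁻¹ * I := lintegral_const_mul' _ _ ofReal_ne_top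
    _ ≤ ENNReal.ofReal m⁻¹ * ENNReal.ofReal m := by gcongr
    _ = 1 := by rw [← ENNReal.ofReal_mul (by positivity), inv_mul_cancel₀ hm0.ne', ofReal_one]

end Orlicz

theorem weak_mem_implies_strong_mem_general
    {X : Type*} [MeasurableSpace X] (μ : MeasureTheory.Measure X)
    (N : ℝ → ℝ) (hN : IsYoungOrlicz N)
    (ν : MeasureTheory.Measure ℝ)
    (hν : ∀ t : ℝ, 0 < t → ν (Set.Ioi t) = Vfun μ N t)
    (C : ℝ) (hC : 0 < C)
    (hJ : ∫⁻ t in Set.Ioi (0:ℝ), ENNReal.ofReal (N (C * t)) ∂ν < ⊤)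
    (f : X → ℝ) (hf : Measurable f)
    (C₂ : ℝ) (hC₂ : 0 < C₂)
    (hT : ∀ t : ℝ, 0 ≤ t → tailFun μ f t ≤ Vfun μ N (t / C₂)) :
    ∀ C₃ : ℝ, 0 < C₃ → C₂ * C₃ ≤ C →
      (∫⁻ x, ENNReal.ofReal (N (C₃ * |f x|)) ∂μ < ⊤) ∧ strongNorm μ N f < ⊤ := by
  intro C₃ hC₃ hCC
  have hmodular : ∫⁻ x, ENNReal.ofReal (N (C₃ * |f x|)) ∂μ < ⊤ :=
    (lintegral_comp_mul_abs_le_of_tailFun_le hN hν hC hf hC₂ hT hC₃ hCC).trans_lt hJ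
  exact ⟨hmodular, strongNorm_lt_top_of_lintegral_lt_top hN.convexOn hN.map_zero hC₃ hmodular⟩

theorem weak_mem_implies_strong_mem
    {X : Type*} [MeasurableSpace X] (μ : MeasureTheory.Measure X) [SigmaFinite μ]
    (hμ0 : μ ≠ 0) (hatomless : Atomless μ)
    (N : ℝ → ℝ) (hN : IsYoungOrlicz N)
    (ν : MeasureTheory.Measure ℝ)
    (hν : ∀ t : ℝ, 0 < t → ν (Set.Ioi t) = Vfun μ N t)
    (C : ℝ) (hC : 0 < C)
    (hJ : ∫⁻ t in Set.Ioi (0:ℝ), ENNReal.ofReal (N (C * t)) ∂ν < ⊤)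
    (f : X → ℝ) (hf : Measurable f)
    (C₂ : ℝ) (hC₂ : 0 < C₂)
    (hT : ∀ t : ℝ, 0 ≤ t → tailFun μ f t ≤ Vfun μ N (t / C₂)) :
    ∀ C₃ : ℝ, 0 < C₃ → C₂ * C₃ ≤ C →
      (∫⁻ x, ENNReal.ofReal (N (C₃ * |f x|)) ∂μ < ⊤) ∧ strongNorm μ N f < ⊤ :=
  weak_mem_implies_strong_mem_general μ N hN ν hν C hC hJ f hf C₂ hC₂ hT
end

section
/- Let (X, μ) be an atomless σ-finite non-zero measure space and N a Young–Orlicz function. If Y(N) := sup{ ‖f‖_{sL(N)} / ‖f‖_{wL(N)} : f ∈ wL(N), f ≠ 0 } is finite, then there exists C₀ ∈ (0, ∞) such that the Lebesgue–Stieltjes integral ∫₀^∞ N(C₀ t) |dV[N](t)| is finite. -/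
open MeasureTheory ENNReal Set Filter Topology

/-!
Cut `(0, ∞)` into the dyadic shells `Iₙ = (2ⁿ, 2ⁿ⁺¹]`, `n ∈ ℤ`; `ν` is the measure `|dV[N]|`.
The masses `ν Iₙ` add up to `ν (0, ∞) ≤ μ X`, so, `μ` being atomless, there are disjoint sets
`Fₙ ⊆ X` with `μ Fₙ = ν Iₙ`. The step function `f = 2ⁿ` on `Fₙ` has `T[f](t) ≤ ν (t, ∞) = V[N](t)`,
hence `‖f‖_{wL(N)} ≤ 1`, and the finiteness of `Y(N)` gives `k > 0` with `∫ N(|f|/k) dμ ≤ 1`.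
As `N(t/2k) ≤ N(2ⁿ/k)` on `Iₙ`, we get `∫₀^∞ N(t/2k) dν ≤ ∑ₙ N(2ⁿ/k) ν Iₙ = ∫ N(|f|/k) dμ ≤ 1`.
-/

open scoped Function

namespace ENNReal

theorem eq_zero_of_bounded_increments {u : ℕ → ℝ≥0∞} {η b : ℝ≥0∞}
    (hu : ∀ k, u k + η ≤ u (k + 1)) (hub : ∀ k, u k ≤ b) (hb : b ≠ ⊤) : η = 0 := by
  have hlin : ∀ k : ℕ, k * η ≤ u k := by
    intro k
    induction k with
    | zero => simp
    | succ k ih =>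
      calc ((k + 1 : ℕ) : ℝ≥0∞) * η = k * η + η := by push_cast; ring
        _ ≤ u k + η := by gcongr
        _ ≤ u (k + 1) := hu k
  by_contra hη
  obtain ⟨k, hk⟩ := ENNReal.exists_nat_mul_gt hη hb
  exact (hk.trans_le (hlin k)).not_ge (hub k)

end ENNReal

section AtomlessMeasure

variable {X : Type*} [MeasurableSpace X]

theorem MeasureTheory.Measure.exists_greedy_extension (μ : Measure X) {s t : Set X} {b : ℝ≥0∞}
    (hb : b ≠ ⊤) (ht : MeasurableSet t) (hts : t ⊆ s) (htb : μ t ≤ b) :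
    ∃ t', MeasurableSet t' ∧ t ⊆ t' ∧ t' ⊆ s ∧ μ t' ≤ b ∧
      ∀ w, MeasurableSet w → w ⊆ s \ t → μ w ≤ b - μ t → μ t + μ w / 2 ≤ μ t' := by
  set P : Set X → Prop := fun v => MeasurableSet v ∧ v ⊆ s \ t ∧ μ v ≤ b - μ t
  set δ := ⨆ (v) (_ : P v), μ v
  obtain ⟨v, ⟨hv, hvs, hvb⟩, hδv⟩ : ∃ v, P v ∧ δ / 2 ≤ μ v := by
    rcases eq_or_ne δ 0 with hδ | hδ
    · exact ⟨∅, ⟨.empty, empty_subset _, by simp⟩, by simp [hδ]⟩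
    have hδtop : δ ≠ ⊤ :=
      ne_top_of_le_ne_top (ne_top_of_le_ne_top hb tsub_le_self) (iSup₂_le fun v hv => hv.2.2)
    obtain ⟨v, hv⟩ := lt_iSup_iff.1 (ENNReal.half_lt_self hδ hδtop)
    obtain ⟨hPv, hlt⟩ := lt_iSup_iff.1 hv
    exact ⟨v, hPv, hlt.le⟩
  have hμ : μ (t ∪ v) = μ t + μ v := measure_union (disjoint_sdiff_right.mono_right hvs) hv
  refine ⟨t ∪ v, ht.union hv, subset_union_left, union_subset hts (hvs.trans sdiff_subset), ?_,
    fun w hw hws hwb => ?_⟩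
  · rw [hμ]
    exact (add_le_add_right hvb _).trans (add_tsub_cancel_of_le htb).le
  · rw [hμ]
    gcongr
    have hwδ : μ w ≤ δ := le_iSup₂ (f := fun v (_ : P v) => μ v) w ⟨hw, hws, hwb⟩
    exact (ENNReal.div_le_div_right hwδ 2).trans hδv

variable {μ : Measure X}

namespace Atomless

theorem exists_subset_measure_pos_le_half (h : Atomless μ) {s : Set X} (hs : MeasurableSet s)
    (hs0 : 0 < μ s) : ∃ t ⊆ s, MeasurableSet t ∧ 0 < μ t ∧ μ t ≤ μ s / 2 := by
  obtain ⟨t, ht, hts, ht0, hlt⟩ := h s hs hs0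
  by_cases hle : μ t ≤ μ s / 2
  · exact ⟨t, hts, ht, ht0, hle⟩
  have hdiff : μ (s \ t) = μ s - μ t := measure_sdiff hts ht.nullMeasurableSet hlt.ne_top
  refine ⟨s \ t, sdiff_subset, hs.diff ht, hdiff ▸ tsub_pos_of_lt hlt, ?_⟩
  rw [hdiff, tsub_le_iff_left]
  calc μ s = μ s / 2 + μ s / 2 := (ENNReal.add_halves _).symm
    _ ≤ μ t + μ s / 2 := by gcongr; exact (not_le.1 hle).le

theorem exists_subset_measure_pos_lt (h : Atomless μ) {s : Set X} (hs : MeasurableSet s)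
    (hs0 : 0 < μ s) {ε : ℝ≥0∞} (hε : 0 < ε) : ∃ t ⊆ s, MeasurableSet t ∧ 0 < μ t ∧ μ t < ε := by
  obtain ⟨t₀, ht₀, ht₀s, ht₀0, ht₀lt⟩ := h s hs hs0
  have halving : ∀ n : ℕ, ∃ t ⊆ s, MeasurableSet t ∧ 0 < μ t ∧ μ t ≤ μ t₀ * 2⁻¹ ^ n := by
    intro n
    induction n with
    | zero => exact ⟨t₀, ht₀s, ht₀, ht₀0, by simp⟩
    | succ n ih =>
      obtain ⟨t, hts, ht, ht0, htle⟩ := ih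
      obtain ⟨d, hdt, hd, hd0, hdle⟩ := h.exists_subset_measure_pos_le_half ht ht0
      refine ⟨d, hdt.trans hts, hd, hd0, hdle.trans ?_⟩
      rw [pow_succ, ← mul_assoc, ← div_eq_mul_inv]
      gcongr
  have hlim : Tendsto (fun n : ℕ => μ t₀ * 2⁻¹ ^ n) atTop (𝓝 0) := by
    simpa using ENNReal.Tendsto.const_mul
      (ENNReal.tendsto_pow_atTop_nhds_zero_of_lt_one (by norm_num)) (Or.inr ht₀lt.ne_top)
  obtain ⟨n, hn⟩ := (hlim.eventually (gt_mem_nhds hε)).exists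
  obtain ⟨t, hts, ht, ht0, htle⟩ := halving n
  exact ⟨t, hts, ht, ht0, htle.trans_lt hn⟩

theorem exists_subset_measure_eq (h : Atomless μ) {s : Set X} (hs : MeasurableSet s)
    {b : ℝ≥0∞} (hbs : b ≤ μ s) (hb : b ≠ ⊤) : ∃ t ⊆ s, MeasurableSet t ∧ μ t = b := by
  have step : ∀ t, MeasurableSet t ∧ t ⊆ s ∧ μ t ≤ b → ∃ t',
      (MeasurableSet t' ∧ t' ⊆ s ∧ μ t' ≤ b) ∧ t ⊆ t' ∧
      ∀ w, MeasurableSet w → w ⊆ s \ t → μ w ≤ b - μ t → μ t + μ w / 2 ≤ μ t' := by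
    rintro t ⟨ht, hts, htb⟩
    obtain ⟨t', ht', htt', ht's, ht'b, hgrow⟩ := μ.exists_greedy_extension hb ht hts htb
    exact ⟨t', ⟨ht', ht's, ht'b⟩, htt', hgrow⟩
  choose! g hgP hsub hgrow using step
  set T : ℕ → Set X := fun k => g^[k] ∅
  have hT_succ : ∀ k, T (k + 1) = g (T k) := fun k => Function.iterate_succ_apply' g k ∅
  have hTP : ∀ k, MeasurableSet (T k) ∧ T k ⊆ s ∧ μ (T k) ≤ b := by
    intro k
    induction k with
    | zero => exact ⟨.empty, empty_subset _, by simp [T]⟩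
    | succ k ih => exact hT_succ k ▸ hgP _ ih
  have hTmono : Monotone T := monotone_nat_of_le_succ fun k => (hT_succ k).symm ▸ hsub _ (hTP k)
  have hUm : MeasurableSet (⋃ k, T k) := .iUnion fun k => (hTP k).1
  have hUb : μ (⋃ k, T k) ≤ b := hTmono.measure_iUnion ▸ iSup_le fun k => (hTP k).2.2
  refine ⟨⋃ k, T k, iUnion_subset fun k => (hTP k).2.1, hUm, hUb.antisymm ?_⟩
  by_contra! hlt
  have hpos : 0 < μ (s \ ⋃ k, T k) :=
    (tsub_pos_of_lt hlt).trans_le ((tsub_le_tsub_right hbs _).trans le_measure_sdiff)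
  obtain ⟨w, hws, hw, hw0, hwlt⟩ :=
    h.exists_subset_measure_pos_lt (hs.diff hUm) hpos (tsub_pos_of_lt hlt)
  -- `w` stays available at every stage, so every stage gains at least `μ w / 2`.
  refine (ENNReal.half_pos hw0.ne').ne' (ENNReal.eq_zero_of_bounded_increments
    (u := fun k => μ (T k)) (fun k => ?_) (fun k => (hTP k).2.2) hb)
  rw [hT_succ]
  exact hgrow _ (hTP k) w hw (hws.trans (sdiff_subset_sdiff_right (subset_iUnion T k)))
    (hwlt.le.trans (tsub_le_tsub_left (measure_mono (subset_iUnion T k)) _))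

theorem exists_pairwise_disjoint_measure_eq_nat (h : Atomless μ) (b : ℕ → ℝ≥0∞)
    (hb : ∀ j, b j ≠ ⊤) (hsum : ∑' j, b j ≤ μ univ) :
    ∃ F : ℕ → Set X, (∀ j, MeasurableSet (F j)) ∧ Pairwise (Disjoint on F) ∧
      ∀ j, μ (F j) = b j := by
  have step : ∀ j U, MeasurableSet U → μ U = ∑ i ∈ Finset.range j, b i →
      ∃ A, MeasurableSet A ∧ Disjoint U A ∧ μ A = b j := by
    intro j U hU hμU
    have hfin : μ U ≠ ⊤ := hμU ▸ ENNReal.sum_ne_top.2 fun i _ => hb i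
    have hbU : b j ≤ μ Uᶜ := by
      rw [measure_compl hU hfin]
      refine ENNReal.le_sub_of_add_le_left hfin ?_
      rw [hμU, ← Finset.sum_range_succ]
      exact (ENNReal.sum_le_tsum _).trans hsum
    obtain ⟨A, hAU, hA, hμA⟩ := h.exists_subset_measure_eq hU.compl hbU (hb j)
    exact ⟨A, hA, disjoint_compl_right.mono_right hAU, hμA⟩
  choose! A hA hAdisj hμA using step
  let U : ℕ → Set X := fun j => Nat.rec ∅ (fun j V => V ∪ A j V) j
  have hU : ∀ j, MeasurableSet (U j) ∧ μ (U j) = ∑ i ∈ Finset.range j, b i := by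
    intro j
    induction j with
    | zero => simp [U]
    | succ j ih =>
      refine ⟨ih.1.union (hA _ _ ih.1 ih.2), ?_⟩
      change μ (U j ∪ A j (U j)) = _
      rw [measure_union (hAdisj _ _ ih.1 ih.2) (hA _ _ ih.1 ih.2), ih.2, hμA _ _ ih.1 ih.2,
        Finset.sum_range_succ]
  have hUmono : Monotone U := monotone_nat_of_le_succ fun j => subset_union_left
  refine ⟨fun j => A j (U j), fun j => hA _ _ (hU j).1 (hU j).2, ?_,
    fun j => hμA _ _ (hU j).1 (hU j).2⟩
  intro i j hij
  wlog hlt : i < j generalizing i j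
  · exact (this hij.symm (hij.lt_or_gt.resolve_left hlt)).symm
  exact (hAdisj _ _ (hU j).1 (hU j).2).mono_left
    (subset_union_right.trans (hUmono (Nat.succ_le_of_lt hlt)))

theorem exists_pairwise_disjoint_measure_eq {ι : Type*} [Countable ι] (h : Atomless μ)
    (b : ι → ℝ≥0∞) (hb : ∀ i, b i ≠ ⊤) (hsum : ∑' i, b i ≤ μ univ) :
    ∃ F : ι → Set X, (∀ i, MeasurableSet (F i)) ∧ Pairwise (Disjoint on F) ∧
      ∀ i, μ (F i) = b i := by
  obtain ⟨g, hg⟩ := Countable.exists_injective_nat ι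
  have hb' : ∀ j, Function.extend g b 0 j ≠ ⊤ := by
    intro j
    by_cases hj : ∃ i, g i = j
    · obtain ⟨i, rfl⟩ := hj
      rw [hg.extend_apply]
      exact hb i
    · rw [Function.extend_apply' _ _ _ hj]
      exact zero_ne_top
  obtain ⟨F, hF, hFd, hFμ⟩ :=
    h.exists_pairwise_disjoint_measure_eq_nat _ hb' (by rwa [tsum_extend_zero hg])
  exact ⟨F ∘ g, fun i => hF _, hFd.comp_of_injective hg, fun i => by simp [hFμ, hg.extend_apply]⟩

end Atomless

end AtomlessMeasure

section DyadicShells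

variable {r : ℝ}

theorem pairwise_disjoint_Ioc_zpow_of_one_lt (hr : 1 < r) :
    Pairwise (Disjoint on fun n : ℤ => Ioc (r ^ n) (r ^ (n + 1))) := by
  intro m n hmn
  refine disjoint_left.2 fun x hm hn => hmn ?_
  have h₁ := (zpow_lt_zpow_iff_right₀ hr).1 (hm.1.trans_le hn.2)
  have h₂ := (zpow_lt_zpow_iff_right₀ hr).1 (hn.1.trans_le hm.2)
  omega

theorem iUnion_Ioc_zpow_eq_Ioi_zero (hr : 1 < r) :
    ⋃ n : ℤ, Ioc (r ^ n) (r ^ (n + 1)) = Ioi 0 := by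
  ext x
  simp only [mem_iUnion, mem_Ioi]
  exact ⟨fun ⟨n, hn⟩ => (zpow_pos (zero_lt_one.trans hr) n).trans hn.1,
    fun hx => exists_mem_Ioc_zpow hx hr⟩

theorem biUnion_Ici_Ioc_zpow (hr : 1 < r) (n : ℤ) :
    ⋃ m ∈ Ici n, Ioc (r ^ m) (r ^ (m + 1)) = Ioi (r ^ n) := by
  ext x
  simp only [mem_iUnion, mem_Ici, mem_Ioi, exists_prop]
  constructor
  · rintro ⟨m, hnm, hm⟩
    exact (zpow_le_zpow_right₀ hr.le hnm).trans_lt hm.1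
  · intro hx
    obtain ⟨m, hm⟩ := exists_mem_Ioc_zpow ((zpow_pos (zero_lt_one.trans hr) n).trans hx) hr
    exact ⟨m, Int.lt_add_one_iff.1 ((zpow_lt_zpow_iff_right₀ hr).1 (hx.trans_le hm.2)), hm⟩

theorem tsum_measure_Ioc_zpow (ν : Measure ℝ) (hr : 1 < r) :
    ∑' n : ℤ, ν (Ioc (r ^ n) (r ^ (n + 1))) = ν (Ioi 0) := by
  rw [← iUnion_Ioc_zpow_eq_Ioi_zero hr,
    measure_iUnion (pairwise_disjoint_Ioc_zpow_of_one_lt hr) fun _ => measurableSet_Ioc]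

end DyadicShells

theorem measure_Ioi_le_of_forall_lt (ν : Measure ℝ) {a : ℝ} {c : ℝ≥0∞}
    (h : ∀ t, a < t → ν (Ioi t) ≤ c) : ν (Ioi a) ≤ c := by
  have hU : Ioi a = ⋃ n : ℕ, Ioi (a + 1 / ((n : ℝ) + 1)) := by
    ext x
    simp only [mem_Ioi, mem_iUnion]
    constructor
    · intro hx
      obtain ⟨n, hn⟩ := exists_nat_one_div_lt (sub_pos.2 hx)
      exact ⟨n, by linarith⟩
    · rintro ⟨n, hn⟩
      exact (lt_add_of_pos_right a Nat.one_div_pos_of_nat).trans hn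
  have hmono : Monotone fun n : ℕ => Ioi (a + 1 / ((n : ℝ) + 1)) :=
    fun m n hmn => Ioi_subset_Ioi (by gcongr)
  rw [hU, hmono.measure_iUnion]
  exact iSup_le fun n => h _ (lt_add_of_pos_right a Nat.one_div_pos_of_nat)

theorem exists_measurable_eq_const_on {X ι : Type*} [MeasurableSpace X] [Countable ι]
    {F : ι → Set X} (hF : ∀ i, MeasurableSet (F i)) (hFd : Pairwise (Disjoint on F)) (c : ι → ℝ) :
    ∃ f : X → ℝ, Measurable f ∧ (∀ i, ∀ x ∈ F i, f x = c i) ∧ ∀ x ∉ ⋃ i, F i, f x = 0 := by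
  obtain ⟨f, hf, hfeq⟩ := exists_measurable_piecewise (mβ := Real.measurableSpace)
    (fun o : Option ι => o.elim (⋃ i, F i)ᶜ F)
    (fun o => by cases o; exacts [(MeasurableSet.iUnion hF).compl, hF _])
    (fun o => o.elim 0 fun i _ => c i) (fun o => by cases o <;> exact measurable_const)
    (by
      rintro (_ | i) (_ | j) hij x ⟨hx, hy⟩
      · exact absurd rfl hij
      · exact absurd (mem_iUnion_of_mem j hy) hx
      · exact absurd (mem_iUnion_of_mem i hx) hy
      · exact absurd hy (disjoint_left.1 (hFd fun h => hij (congrArg some h)) hx))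
  exact ⟨f, hf, fun i x hx => hfeq (some i) hx, fun x hx => hfeq none hx⟩

section DyadicTestFunction

variable {X : Type*} [MeasurableSpace X] {μ : Measure X} {ν : Measure ℝ} {r : ℝ}
  {F : ℤ → Set X} {f : X → ℝ}

theorem tailFun_le_measure_Ioi_of_eq_zpow_on (hr : 1 < r) (hF : ∀ n, MeasurableSet (F n))
    (hFd : Pairwise (Disjoint on F)) (hFν : ∀ n, μ (F n) = ν (Ioc (r ^ n) (r ^ (n + 1))))
    (hfF : ∀ n, ∀ x ∈ F n, f x = r ^ n) (hf0 : ∀ x ∉ ⋃ n, F n, f x = 0) {t : ℝ} (ht : 0 < t) :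
    tailFun μ f t ≤ ν (Ioi t) := by
  obtain ⟨n, hn⟩ := exists_mem_Ioc_zpow ht hr
  have hsub : {x | t ≤ |f x|} ⊆ ⋃ m ∈ Ici (n + 1), F m := by
    intro x hx
    by_cases hxF : x ∈ ⋃ m, F m
    · obtain ⟨m, hm⟩ := mem_iUnion.1 hxF
      have htm : t ≤ r ^ m := by
        simpa [hfF m x hm, abs_of_pos (zpow_pos (zero_lt_one.trans hr) m)] using hx
      have hnm : n < m := (zpow_lt_zpow_iff_right₀ hr).1 (hn.1.trans_le htm)
      exact mem_biUnion (Int.add_one_le_iff.2 hnm) hm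
    · have hx' : t ≤ |f x| := hx
      rw [hf0 x hxF, abs_zero] at hx'
      exact absurd hx' ht.not_ge
  calc tailFun μ f t ≤ μ (⋃ m ∈ Ici (n + 1), F m) := measure_mono hsub
    _ = ν (⋃ m ∈ Ici (n + 1), Ioc (r ^ m) (r ^ (m + 1))) := by
      rw [measure_biUnion (to_countable _) (hFd.set_pairwise _) fun m _ => hF m,
        measure_biUnion (to_countable _) ((pairwise_disjoint_Ioc_zpow_of_one_lt hr).set_pairwise _)
          fun m _ => measurableSet_Ioc]
      simp only [hFν]
    _ = ν (Ioi (r ^ (n + 1))) := by rw [biUnion_Ici_Ioc_zpow hr]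
    _ ≤ ν (Ioi t) := measure_mono (Ioi_subset_Ioi hn.2)

theorem setLIntegral_Ioi_zero_le_lintegral_of_eq_zpow_on (hr : 1 < r)
    (hF : ∀ n, MeasurableSet (F n)) (hFd : Pairwise (Disjoint on F))
    (hFν : ∀ n, μ (F n) = ν (Ioc (r ^ n) (r ^ (n + 1)))) (hfF : ∀ n, ∀ x ∈ F n, f x = r ^ n)
    {g : ℝ → ℝ≥0∞} (hg : MonotoneOn g (Ioi 0)) :
    ∫⁻ t in Ioi 0, g (t / r) ∂ν ≤ ∫⁻ x, g |f x| ∂μ := by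
  have hr0 : 0 < r := zero_lt_one.trans hr
  have hshell : ∀ n : ℤ,
      ∫⁻ t in Ioc (r ^ n) (r ^ (n + 1)), g (t / r) ∂ν ≤ ∫⁻ x in F n, g |f x| ∂μ := by
    intro n
    calc ∫⁻ t in Ioc (r ^ n) (r ^ (n + 1)), g (t / r) ∂ν
        ≤ ∫⁻ _ in Ioc (r ^ n) (r ^ (n + 1)), g (r ^ n) ∂ν := by
          refine setLIntegral_mono measurable_const fun t ht => hg ?_ (zpow_pos hr0 n) ?_
          · exact div_pos ((zpow_pos hr0 n).trans ht.1) hr0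
          · rw [div_le_iff₀ hr0, ← zpow_add_one₀ hr0.ne']
            exact ht.2
      _ = ∫⁻ x in F n, g |f x| ∂μ := by
          rw [setLIntegral_const, ← hFν, setLIntegral_congr_fun (hF n) fun x hx => by
            rw [hfF n x hx, abs_of_pos (zpow_pos hr0 n)], setLIntegral_const]
  calc ∫⁻ t in Ioi 0, g (t / r) ∂ν
      = ∑' n : ℤ, ∫⁻ t in Ioc (r ^ n) (r ^ (n + 1)), g (t / r) ∂ν := by
        rw [← iUnion_Ioc_zpow_eq_Ioi_zero hr, lintegral_iUnion (fun _ => measurableSet_Ioc)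
          (pairwise_disjoint_Ioc_zpow_of_one_lt hr)]
    _ ≤ ∑' n, ∫⁻ x in F n, g |f x| ∂μ := ENNReal.tsum_le_tsum hshell
    _ = ∫⁻ x in ⋃ n, F n, g |f x| ∂μ := (lintegral_iUnion hF hFd _).symm
    _ ≤ ∫⁻ x, g |f x| ∂μ := setLIntegral_le_lintegral _ _

theorem not_ae_eq_zero_of_eq_zpow_on (hr : 1 < r)
    (hFν : ∀ n, μ (F n) = ν (Ioc (r ^ n) (r ^ (n + 1)))) (hfF : ∀ n, ∀ x ∈ F n, f x = r ^ n)
    (hν : ν (Ioi 0) ≠ 0) : ¬ f =ᵐ[μ] 0 := by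
  obtain ⟨n, hn⟩ : ∃ n : ℤ, ν (Ioc (r ^ n) (r ^ (n + 1))) ≠ 0 := by
    by_contra! h
    exact hν (by rw [← tsum_measure_Ioc_zpow ν hr]; simp [h])
  refine fun hf => hn ((hFν n).symm.trans (measure_mono_null (fun x hx => ?_) (ae_iff.1 hf)))
  simp [hfF n x hx, (zpow_pos (zero_lt_one.trans hr) n).ne']

end DyadicTestFunction

theorem IsYoungOrlicz.map_zero_s2 {N : ℝ → ℝ} (hN : IsYoungOrlicz N) : N 0 = 0 := by
  have hprod : Tendsto (fun u => N u / u * u) (𝓝[>] 0) (𝓝 0) := by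
    simpa using hN.tendsto_div_zero.mul (tendsto_id.mono_left nhdsWithin_le_nhds)
  refine tendsto_nhds_unique ((hN.continuous.tendsto 0).mono_left nhdsWithin_le_nhds)
    (hprod.congr' ?_)
  filter_upwards [self_mem_nhdsWithin] with u hu
  exact div_mul_cancel₀ (N u) (ne_of_gt hu)

theorem IsYoungOrlicz.pos {N : ℝ → ℝ} (hN : IsYoungOrlicz N) {t : ℝ} (ht : 0 < t) : 0 < N t :=
  hN.map_zero_s2 ▸ hN.strictMonoOn self_mem_Ici ht.le ht

section OrliczNorms

variable {X : Type*} [MeasurableSpace X] {μ : Measure X} {N : ℝ → ℝ} {f : X → ℝ}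

theorem Vfun_ne_top (hN : IsYoungOrlicz N) {t : ℝ} (ht : 0 < t) : Vfun μ N t ≠ ⊤ :=
  ne_top_of_le_ne_top (ENNReal.inv_ne_top.2 (ENNReal.ofReal_pos.2 (hN.pos ht)).ne')
    (min_le_right _ _)

theorem Vfun_pos (hμ : μ ≠ 0) (N : ℝ → ℝ) (t : ℝ) : 0 < Vfun μ N t :=
  lt_min (Measure.measure_univ_pos.2 hμ) (ENNReal.inv_pos.2 ENNReal.ofReal_ne_top)

theorem weakNorm_le_one_of_tailFun_le (h : ∀ t > 0, tailFun μ f t ≤ Vfun μ N t) :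
    weakNorm μ N f ≤ 1 := by
  have h1 : (1 : ℝ) ∈ {K : ℝ | 0 < K ∧ ∀ t > 0, tailFun μ f t ≤ Vfun μ N (t / K)} :=
    ⟨one_pos, fun t ht => by simpa using h t ht⟩
  simpa [weakNorm] using sInf_le (mem_image_of_mem ENNReal.ofReal h1)

theorem strongNorm_ne_top_of_Ynorm_lt_top (hY : Ynorm μ N < ⊤) (hf : Measurable f)
    (hf0 : ¬ f =ᵐ[μ] 0) (hw : weakNorm μ N f ≠ ⊤) : strongNorm μ N f ≠ ⊤ := by
  intro hs
  have hratio : strongNorm μ N f / weakNorm μ N f ≤ Ynorm μ N :=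
    le_iSup_of_le f <| le_iSup_of_le hf <| le_iSup_of_le hf0 <| le_iSup_of_le hw le_rfl
  rw [hs, ENNReal.top_div_of_ne_top hw, top_le_iff] at hratio
  exact hY.ne hratio

theorem exists_lintegral_le_one_of_strongNorm_ne_top (h : strongNorm μ N f ≠ ⊤) :
    ∃ k > 0, ∫⁻ x, ENNReal.ofReal (N (|f x| / k)) ∂μ ≤ 1 := by
  by_contra! hk
  have hempty : {k : ℝ | 0 < k ∧ ∫⁻ x, ENNReal.ofReal (N (|f x| / k)) ∂μ ≤ 1} = ∅ :=
    eq_empty_of_forall_notMem fun k hk' => (hk k hk'.1).not_ge hk'.2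
  exact h (by rw [strongNorm, hempty, image_empty, sInf_empty])

end OrliczNorms

theorem coincidence_implies_integral_finite_general
    {X : Type*} [MeasurableSpace X] (μ : MeasureTheory.Measure X)
    (hμ0 : μ ≠ 0) (hatomless : Atomless μ)
    (N : ℝ → ℝ) (hN : IsYoungOrlicz N)
    (ν : MeasureTheory.Measure ℝ)
    (hν : ∀ t : ℝ, 0 < t → ν (Set.Ioi t) = Vfun μ N t)
    (hY : Ynorm μ N < ⊤) :
    ∃ C₀ : ℝ, 0 < C₀ ∧ ∫⁻ t in Set.Ioi (0:ℝ), ENNReal.ofReal (N (C₀ * t)) ∂ν < ⊤ := by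
  have h2 : (1 : ℝ) < 2 := one_lt_two
  have hshell : ∀ n : ℤ, ν (Ioc (2 ^ n) (2 ^ (n + 1))) ≠ ⊤ := fun n =>
    ne_top_of_le_ne_top ((hν _ (zpow_pos two_pos n)).symm ▸ Vfun_ne_top hN (zpow_pos two_pos n))
      (measure_mono Ioc_subset_Ioi_self)
  have hmass : ν (Ioi 0) ≤ μ univ :=
    measure_Ioi_le_of_forall_lt ν fun t ht => (hν t ht).trans_le (min_le_left _ _)
  obtain ⟨F, hF, hFd, hFν⟩ := hatomless.exists_pairwise_disjoint_measure_eq _ hshell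
    ((tsum_measure_Ioc_zpow ν h2).trans_le hmass)
  obtain ⟨f, hf, hfF, hf0⟩ := exists_measurable_eq_const_on hF hFd fun n : ℤ => (2 : ℝ) ^ n
  have hweak : weakNorm μ N f ≤ 1 := weakNorm_le_one_of_tailFun_le fun t ht =>
    (tailFun_le_measure_Ioi_of_eq_zpow_on h2 hF hFd hFν hfF hf0 ht).trans_eq (hν t ht)
  have hν0 : ν (Ioi 0) ≠ 0 := ((Vfun_pos hμ0 N 1).trans_le
    ((hν 1 one_pos).symm.trans_le (measure_mono (Ioi_subset_Ioi zero_le_one)))).ne'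
  obtain ⟨k, hk, hint⟩ := exists_lintegral_le_one_of_strongNorm_ne_top
    (strongNorm_ne_top_of_Ynorm_lt_top hY hf (not_ae_eq_zero_of_eq_zpow_on h2 hFν hfF hν0)
      (ne_top_of_le_ne_top one_ne_top hweak))
  have hg : MonotoneOn (fun u => ENNReal.ofReal (N (u / k))) (Ioi 0) := fun u hu v hv huv =>
    ENNReal.ofReal_le_ofReal (hN.strictMonoOn.monotoneOn (div_pos hu hk).le (div_pos hv hk).le
      (div_le_div_of_nonneg_right huv hk.le))
  refine ⟨(2 * k)⁻¹, by positivity, lt_of_le_of_lt ?_ (hint.trans_lt one_lt_top)⟩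
  calc ∫⁻ t in Ioi 0, ENNReal.ofReal (N ((2 * k)⁻¹ * t)) ∂ν
      = ∫⁻ t in Ioi 0, ENNReal.ofReal (N (t / 2 / k)) ∂ν := by
        simp only [div_div, inv_mul_eq_div]
    _ ≤ ∫⁻ x, ENNReal.ofReal (N (|f x| / k)) ∂μ :=
        setLIntegral_Ioi_zero_le_lintegral_of_eq_zpow_on h2 hF hFd hFν hfF hg

theorem coincidence_implies_integral_finite
    {X : Type*} [MeasurableSpace X] (μ : MeasureTheory.Measure X) [SigmaFinite μ]
    (hμ0 : μ ≠ 0) (hatomless : Atomless μ)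
    (N : ℝ → ℝ) (hN : IsYoungOrlicz N)
    (ν : MeasureTheory.Measure ℝ)
    (hν : ∀ t : ℝ, 0 < t → ν (Set.Ioi t) = Vfun μ N t)
    (hY : Ynorm μ N < ⊤) :
    ∃ C₀ : ℝ, 0 < C₀ ∧ ∫⁻ t in Set.Ioi (0:ℝ), ENNReal.ofReal (N (C₀ * t)) ∂ν < ⊤ :=
  coincidence_implies_integral_finite_general μ hμ0 hatomless N hN ν hν hY
end

section
/- For a probability measure and N^{(m)}(u) = exp(|u|^m/m) − 1, the exact embedding constants satisfy lim_{m → ∞} k₀[N^{(m)}] = 1, where k₀[N^{(m)}] = β₀^{-1/m} and β₀ ∈ (0, 1) is the unique solution of G(β₀) = 2. Consequently, since k₀[N] ≥ 1 for every Young–Orlicz function N with J(N) < ∞ (because ‖f‖_{wL(N)} ≤ ‖f‖_{sL(N)} always), the infimum of k₀[N] over all Young–Orlicz functions N with J(N) < ∞ equals 1. -/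
open MeasureTheory ENNReal Set Filter Topology

/-!
For `N = N^{(m)}` one has `N⁻¹(w) = (m log (1 + w))^{1/m}`, so
`N (N⁻¹(w) / β^{-1/m}) = (1 + w)^β - 1` and `Q[N](β^{-1/m}) = ∫_1^∞ ((1 + w)^β - 1) w⁻² dw`.
The substitution `w = z⁻¹ - 1` turns this integral into `G(β) - G(0) = G(β) - 1`, which is `1`
exactly when `G(β) = 2`. So `k₀[N^{(m)}] = β₀^{-1/m}`, which tends to `1` as `m → ∞`, while
every `k₀` is at least `1`.
-/

lemma Gfun_zero : Gfun 0 = 1 := by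
  have hpt : ∀ z ∈ Ioo (0:ℝ) (1/2),
      ENNReal.ofReal ((1 - z) ^ (-(2:ℝ)) * z ^ (-(0:ℝ))) =
        ENNReal.ofReal ((1 - z) ^ (-(2:ℝ))) := by
    intro z _; rw [neg_zero, Real.rpow_zero, mul_one]
  have hcont : ContinuousOn (fun z : ℝ => (1 - z) ^ (-(2:ℝ))) (Icc 0 (1/2)) := by
    refine ContinuousOn.rpow_const (by fun_prop) fun z hz => Or.inl ?_
    exact (by linarith [hz.2] : (0:ℝ) < 1 - z).ne'
  have hint : IntegrableOn (fun z : ℝ => (1 - z) ^ (-(2:ℝ))) (Ioo 0 (1/2)) :=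
    (hcont.integrableOn_Icc).mono_set Ioo_subset_Icc_self
  have hval : ∫ z in (0:ℝ)..(1/2), (1 - z) ^ (-(2:ℝ)) = 1 := by
    rw [intervalIntegral.integral_comp_sub_left (fun x : ℝ => x ^ (-(2:ℝ))), integral_rpow]
    · norm_num
    · right; norm_num [Set.uIcc_of_le]
  rw [Gfun, setLIntegral_congr_fun measurableSet_Ioo hpt,
    ← ofReal_integral_eq_lintegral_ofReal hint, ← integral_Ioc_eq_integral_Ioo,
    ← intervalIntegral.integral_of_le (by norm_num), hval, ENNReal.ofReal_one]
  filter_upwards [ae_restrict_mem measurableSet_Ioo] with z hz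
  exact Real.rpow_nonneg (by linarith [hz.2]) _

lemma lintegral_Ioi_one_eq_lintegral_Ioo (g : ℝ → ℝ≥0∞) :
    ∫⁻ w in Ioi 1, g w = ∫⁻ z in Ioo 0 (1/2), ENNReal.ofReal (z ^ 2)⁻¹ * g (z⁻¹ - 1) := by
  have himg : (fun z : ℝ => z⁻¹ - 1) '' Ioo 0 (1/2) = Ioi 1 := by
    ext w
    refine ⟨?_, fun hw => ?_⟩
    · rintro ⟨z, ⟨hz0, hz⟩, rfl⟩
      have : 2 < z⁻¹ := by rw [lt_inv_comm₀ two_pos hz0]; linarith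
      show 1 < z⁻¹ - 1; linarith
    · have hw : 1 < w := hw
      refine ⟨(1 + w)⁻¹, ⟨inv_pos.2 (by linarith), ?_⟩, by simp⟩
      rw [inv_lt_comm₀ (by linarith) (by norm_num)]; norm_num; linarith
  have hderiv : ∀ z ∈ Ioo (0:ℝ) (1/2),
      HasDerivWithinAt (fun z : ℝ => z⁻¹ - 1) (-(z ^ 2)⁻¹) (Ioo 0 (1/2)) z := fun z hz =>
    ((hasDerivAt_inv hz.1.ne').sub_const 1).hasDerivWithinAt
  have hinj : InjOn (fun z : ℝ => z⁻¹ - 1) (Ioo 0 (1/2)) := fun a _ b _ h => by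
    simpa using h
  rw [← himg, lintegral_image_eq_lintegral_abs_deriv_mul measurableSet_Ioo hderiv hinj]
  refine setLIntegral_congr_fun measurableSet_Ioo fun z hz => ?_
  rw [abs_neg, abs_of_pos (by have := hz.1; positivity)]

lemma lintegral_Ioi_one_rpow_sub_one_div_sq {β : ℝ} (hβ : 0 ≤ β) :
    ∫⁻ w in Ioi 1, ENNReal.ofReal (((1 + w) ^ β - 1) / w ^ 2) = Gfun β - Gfun 0 := by
  set G : ℝ → ℝ → ℝ := fun α z => (1 - z) ^ (-(2:ℝ)) * z ^ (-α)
  have hG_mono : ∀ z ∈ Ioo (0:ℝ) (1/2), G 0 z ≤ G β z := fun z hz =>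
    mul_le_mul_of_nonneg_left
      (Real.rpow_le_rpow_of_exponent_ge hz.1 (by linarith [hz.2]) (by linarith))
      (Real.rpow_nonneg (by linarith [hz.2]) _)
  have hpt : ∀ z ∈ Ioo (0:ℝ) (1/2), ENNReal.ofReal (z ^ 2)⁻¹ *
      ENNReal.ofReal (((1 + (z⁻¹ - 1)) ^ β - 1) / (z⁻¹ - 1) ^ 2) =
      ENNReal.ofReal (G β z) - ENNReal.ofReal (G 0 z) := by
    intro z hz
    have hz0 := hz.1
    have hz1 : 0 < 1 - z := by linarith [hz.2]
    rw [← ENNReal.ofReal_mul (by positivity), ← ENNReal.ofReal_sub _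
      (mul_nonneg (Real.rpow_nonneg hz1.le _) (Real.rpow_nonneg hz0.le _))]
    congr 1
    simp only [G, add_sub_cancel, Real.inv_rpow hz0.le, ← Real.rpow_neg hz0.le, neg_zero,
      Real.rpow_zero, Real.rpow_neg hz1.le, Real.rpow_two]
    field_simp
  rw [lintegral_Ioi_one_eq_lintegral_Ioo, setLIntegral_congr_fun measurableSet_Ioo hpt,
    lintegral_sub (by fun_prop) (ne_of_eq_of_ne Gfun_zero one_ne_top)]
  · rfl
  · filter_upwards [ae_restrict_mem measurableSet_Ioo] with z hz
    exact ENNReal.ofReal_le_ofReal (hG_mono z hz)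

noncomputable def expOrlicz (m u : ℝ) : ℝ := Real.exp (|u| ^ m / m) - 1

lemma mul_log_one_add_nonneg {m w : ℝ} (hm : 0 ≤ m) (hw : 0 ≤ w) : 0 ≤ m * Real.log (1 + w) :=
  mul_nonneg hm (Real.log_nonneg (by linarith))

lemma le_expOrlicz_iff {m w u : ℝ} (hm : 0 < m) (hw : 0 ≤ w) (hu : 0 ≤ u) :
    w ≤ expOrlicz m u ↔ (m * Real.log (1 + w)) ^ (1 / m) ≤ u := by
  rw [expOrlicz, abs_of_nonneg hu, le_sub_iff_add_le', ← Real.log_le_iff_le_exp (by linarith),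
    le_div_iff₀ hm, one_div, Real.rpow_inv_le_iff_of_pos (mul_log_one_add_nonneg hm.le hw) hu hm,
    mul_comm]

lemma Ninv_expOrlicz {m w : ℝ} (hm : 0 < m) (hw : 0 ≤ w) :
    Ninv (expOrlicz m) w = (m * Real.log (1 + w)) ^ (1 / m) := by
  have hset : {u | 0 ≤ u ∧ w ≤ expOrlicz m u} = Ici ((m * Real.log (1 + w)) ^ (1 / m)) := by
    ext u
    refine ⟨fun ⟨hu, hwu⟩ => (le_expOrlicz_iff hm hw hu).1 hwu, fun hu => ?_⟩
    have hu0 : 0 ≤ u := (Real.rpow_nonneg (mul_log_one_add_nonneg hm.le hw) _).trans hu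
    exact ⟨hu0, (le_expOrlicz_iff hm hw hu0).2 hu⟩
  rw [Ninv, hset, csInf_Ici]

lemma expOrlicz_Ninv_div_rpow {m w β : ℝ} (hm : 0 < m) (hw : 0 ≤ w) (hβ : 0 ≤ β) :
    expOrlicz m (Ninv (expOrlicz m) w / β ^ (-(1 / m))) = (1 + w) ^ β - 1 := by
  have hlog := mul_log_one_add_nonneg hm.le hw
  rw [Ninv_expOrlicz hm hw, Real.rpow_neg hβ, div_inv_eq_mul, ← Real.mul_rpow hlog hβ, expOrlicz,
    abs_of_nonneg (Real.rpow_nonneg (mul_nonneg hlog hβ) _), ← Real.rpow_mul (mul_nonneg hlog hβ),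
    one_div_mul_cancel hm.ne', Real.rpow_one, Real.rpow_def_of_pos (by linarith)]
  congr 2
  field_simp

lemma Qfun_expOrlicz_rpow {X : Type*} [MeasurableSpace X] (μ : Measure X)
    [IsProbabilityMeasure μ] {m β : ℝ} (hm : 0 < m) (hβ : 0 ≤ β) :
    Qfun μ (expOrlicz m) (β ^ (-(1 / m))) =
      ∫⁻ w in Ioi 1, ENNReal.ofReal (((1 + w) ^ β - 1) / w ^ 2) := by
  rw [Qfun, measure_univ, inv_one, ENNReal.toReal_one]
  refine setLIntegral_congr_fun measurableSet_Ioi fun w hw => ?_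
  rw [expOrlicz_Ninv_div_rpow hm (zero_le_one.trans (le_of_lt hw)) hβ]

lemma ConvexOn.exp {E : Type*} [AddCommMonoid E] [Module ℝ E] {s : Set E} {f : E → ℝ}
    (hf : ConvexOn ℝ s f) : ConvexOn ℝ s fun x => Real.exp (f x) :=
  ⟨hf.1, fun _ hx _ hy _ _ ha hb hab =>
    (Real.exp_le_exp.2 (hf.2 hx hy ha hb hab)).trans
      (convexOn_exp.2 (mem_univ _) (mem_univ _) ha hb hab)⟩

lemma ConvexOn.comp_abs {g : ℝ → ℝ} (hg : ConvexOn ℝ (Ici 0) g) (hg' : MonotoneOn g (Ici 0)) :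
    ConvexOn ℝ univ fun x => g |x| := by
  refine ⟨convex_univ, fun x _ y _ a b ha hb hab => ?_⟩
  have habs : |a • x + b • y| ≤ a • |x| + b • |y| := by
    simpa [abs_mul, abs_of_nonneg ha, abs_of_nonneg hb] using abs_add_le (a * x) (b * y)
  have hpos : 0 ≤ a • |x| + b • |y| :=
    add_nonneg (smul_nonneg ha (abs_nonneg x)) (smul_nonneg hb (abs_nonneg y))
  exact (hg' (abs_nonneg (a • x + b • y)) hpos habs).trans
    (hg.2 (abs_nonneg x) (abs_nonneg y) ha hb hab)

lemma convexOn_expOrlicz {m : ℝ} (hm : 1 ≤ m) : ConvexOn ℝ univ (expOrlicz m) := by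
  have h := (((convexOn_rpow hm).comp_abs (Real.monotoneOn_rpow_Ici_of_exponent_nonneg
    (by linarith))).smul (inv_nonneg.2 (by linarith : (0:ℝ) ≤ m))).exp.add_const (-1)
  refine h.congr fun u _ => ?_
  simp [expOrlicz, div_eq_inv_mul, sub_eq_add_neg]

lemma strictMonoOn_expOrlicz {m : ℝ} (hm : 0 < m) : StrictMonoOn (expOrlicz m) (Ici 0) :=
  fun a ha b hb hab => by
    have := Real.rpow_lt_rpow (mem_Ici.1 ha) hab hm
    simp only [expOrlicz, abs_of_nonneg (mem_Ici.1 ha), abs_of_nonneg (mem_Ici.1 hb)]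
    gcongr

lemma continuous_expOrlicz {m : ℝ} (hm : 0 ≤ m) : Continuous (expOrlicz m) :=
  ((continuous_abs.rpow_const fun _ => Or.inr hm).div_const m).rexp.sub continuous_const

lemma div_le_expOrlicz (m u : ℝ) : |u| ^ m / m ≤ expOrlicz m u := by
  unfold expOrlicz
  linarith [Real.add_one_le_exp (|u| ^ m / m)]

lemma expOrlicz_le {m u : ℝ} (hm : 0 ≤ m) (hu : |u| ^ m / m ≤ 1) :
    expOrlicz m u ≤ 2 * (|u| ^ m / m) := by
  have h0 : 0 ≤ |u| ^ m / m := by positivity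
  have := Real.abs_exp_sub_one_le (abs_le.2 ⟨by linarith, hu⟩)
  rw [abs_of_nonneg h0] at this
  exact (le_abs_self _).trans this

lemma abs_rpow_div_div_self {m u : ℝ} (hu : 0 < u) : |u| ^ m / m / u = u ^ (m - 1) / m := by
  rw [abs_of_pos hu, Real.rpow_sub_one hu.ne']
  ring

lemma tendsto_expOrlicz_div_nhdsGT_zero {m : ℝ} (hm : 1 < m) :
    Tendsto (fun u => expOrlicz m u / u) (𝓝[>] 0) (𝓝 0) := by
  have hlim : Tendsto (fun u : ℝ => 2 * (u ^ (m - 1) / m)) (𝓝[>] 0) (𝓝 0) := by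
    have h := (Real.continuousAt_rpow_const 0 (m - 1) (Or.inr (by linarith))).tendsto
    rw [Real.zero_rpow (by linarith)] at h
    simpa using ((h.div_const m).const_mul 2).mono_left nhdsWithin_le_nhds
  refine tendsto_of_tendsto_of_tendsto_of_le_of_le' tendsto_const_nhds hlim ?_ ?_
  · filter_upwards [self_mem_nhdsWithin] with u (hu : 0 < u)
    exact div_nonneg ((by positivity : 0 ≤ |u| ^ m / m).trans (div_le_expOrlicz m u)) hu.le
  · filter_upwards [Ioo_mem_nhdsGT one_pos] with u ⟨hu0, hu1⟩
    have hsmall : |u| ^ m / m ≤ 1 := by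
      rw [abs_of_pos hu0, div_le_one (by linarith)]
      linarith [Real.rpow_le_one hu0.le hu1.le (by linarith : 0 ≤ m)]
    rw [← abs_rpow_div_div_self hu0, mul_div_assoc']
    exact div_le_div_of_nonneg_right (expOrlicz_le (by linarith) hsmall) hu0.le

lemma tendsto_expOrlicz_div_atTop {m : ℝ} (hm : 1 < m) :
    Tendsto (fun u => expOrlicz m u / u) atTop atTop := by
  refine tendsto_atTop_mono' atTop ?_
    ((tendsto_rpow_atTop (sub_pos.2 hm)).atTop_div_const (by linarith : 0 < m))
  filter_upwards [eventually_gt_atTop 0] with u hu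
  rw [← abs_rpow_div_div_self hu]
  exact div_le_div_of_nonneg_right (div_le_expOrlicz m u) hu.le

lemma isYoungOrlicz_expOrlicz {m : ℝ} (hm : 1 < m) : IsYoungOrlicz (expOrlicz m) where
  even u := by simp only [expOrlicz, abs_neg]
  continuous := continuous_expOrlicz (by linarith)
  convexOn := convexOn_expOrlicz hm.le
  nonneg u := (div_nonneg (by positivity) (by linarith)).trans (div_le_expOrlicz m u)
  strictMonoOn := strictMonoOn_expOrlicz (by linarith)
  tendsto_atTop := ((tendsto_expOrlicz_div_atTop hm).atTop_mul_atTop₀ tendsto_id).congr'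
    (by filter_upwards [eventually_gt_atTop 0] with u hu using div_mul_cancel₀ _ hu.ne')
  tendsto_div_zero := tendsto_expOrlicz_div_nhdsGT_zero hm
  tendsto_div_atTop := tendsto_expOrlicz_div_atTop hm

theorem kZero_infimum_eq_one
    {X : Type*} [MeasurableSpace X] (μ : MeasureTheory.Measure X)
    [MeasureTheory.IsProbabilityMeasure μ]
    (β₀ : ℝ) (hβ₀ : β₀ ∈ Set.Ioo (0:ℝ) 1) (hG : Gfun β₀ = 2) :
    (∀ m : ℝ, 1 < m → 1 < β₀ ^ (-(1/m)) ∧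
        Qfun μ (fun u : ℝ => Real.exp (|u| ^ m / m) - 1) (β₀ ^ (-(1/m))) = 1) ∧
    Filter.Tendsto (fun m : ℝ => β₀ ^ (-(1/m))) Filter.atTop (nhds 1) ∧
    (∀ (N : ℝ → ℝ) (k : ℝ), IsYoungOrlicz N → 1 < k ∧ Qfun μ N k = 1 → 1 ≤ k) ∧
    sInf {k : ℝ | ∃ N : ℝ → ℝ, IsYoungOrlicz N ∧
        (∃ c : ℝ, 0 < c ∧ Qfun μ N c < ⊤) ∧ 1 < k ∧ Qfun μ N k = 1} = 1 := by
  obtain ⟨hβ0, hβ1⟩ := hβ₀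
  have hk₀ : ∀ m : ℝ, 1 < m →
      1 < β₀ ^ (-(1/m)) ∧ Qfun μ (expOrlicz m) (β₀ ^ (-(1/m))) = 1 := fun m hm =>
    ⟨Real.one_lt_rpow_of_pos_of_lt_one_of_neg hβ0 hβ1 (neg_lt_zero.2 (one_div_pos.2 (by linarith))),
      by rw [Qfun_expOrlicz_rpow μ (by linarith) hβ0.le,
        lintegral_Ioi_one_rpow_sub_one_div_sq hβ0.le, hG, Gfun_zero, ← one_add_one_eq_two,
        ENNReal.add_sub_cancel_right one_ne_top]⟩
  have hlim : Tendsto (fun m : ℝ => β₀ ^ (-(1/m))) atTop (𝓝 1) := by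
    have h := (Real.continuousAt_const_rpow hβ0.ne').tendsto.comp
      ((tendsto_const_nhds (x := (1:ℝ))).div_atTop tendsto_id).neg
    simpa [Function.comp_def] using h
  refine ⟨hk₀, hlim, fun _ _ _ hk => hk.1.le, ?_⟩
  set S := {k : ℝ | ∃ N : ℝ → ℝ, IsYoungOrlicz N ∧
    (∃ c : ℝ, 0 < c ∧ Qfun μ N c < ⊤) ∧ 1 < k ∧ Qfun μ N k = 1}
  have hmem : ∀ m : ℝ, 1 < m → β₀ ^ (-(1/m)) ∈ S := fun m hm =>
    ⟨expOrlicz m, isYoungOrlicz_expOrlicz hm,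
      ⟨_, by positivity, (hk₀ m hm).2 ▸ one_lt_top⟩, hk₀ m hm⟩
  have hglb : IsGLB S 1 := isGLB_of_mem_closure (fun k ⟨_, _, _, hk, _⟩ => hk.le)
    (mem_closure_of_tendsto hlim ((eventually_gt_atTop 1).mono hmem))
  exact hglb.csInf_eq ⟨_, hmem 2 one_lt_two⟩
end
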